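/- arXiv:1006.2403 — 5 statements merged into one kernel-verified Lean document; each statement's English description precedes it below -/
import Mathlib

section
/- Suppose the kernel T is irreducible (for all states x, y there exists n ≥ 0 such that the n-step transition probability from x to y is positive) and that π is a stationary probability distribution for T. Let R be a minimal nonnegative solution of the matrix equation A0 + R·A1 + R²·A2 = R; that is, R is a 2×2 real matrix with nonnegative entries satisfying the equation, and R ≤ S entrywise for every 2×2 real matrix S with nonnegative entries satisfying A0 + S·A1 + S²·A2 = S. Then the level distributions satisfy π_{q+1} = π_q · R for every q ≥ 1. -/
/-!
The iterates `R₀ = 0`, `Rₖ₊₁ = A0 + Rₖ A1 + Rₖ² A2` increase to the minimal solution `R`.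
The balance equations at levels `q ≥ 1` read `π_{q+1} = π_q A0 + π_{q+1} A1 + π_{q+2} A2`, so
induction on `k` gives `π_q Rₖ ≤ π_{q+1}` and hence `π_q R ≤ π_{q+1}`. Irreducibility makes `π`
positive, so `π_1 Rᵏ ≤ π_{k+1} → 0` forces `Rᵏ → 0`, and then `R A2 𝟙 = A0 𝟙`.

The defects `δ_q = π_{q+1} - π_q R ≥ 0` satisfy `δ_q = δ_q (A1 + R A2) + δ_{q+1} A2`. Pairing
with `𝟙` shows that `δ_q A2 𝟙` does not depend on `q`; it tends to `0`, so `δ_q A2 = 0`. Hence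
every phase in the support of `δ_q` has no downward transitions, and with two phases the equation
`δ_q = δ_q (A1 + R A2)` produces an absorbing set of states above level `0`, which irreducibility
rules out.
-/

open Matrix

/-- The quasi-birth-death transition kernel on `{0,1} × ℕ` built from the boundary
matrices `C1, C0` (level 0) and the level matrices `A2, A1, A0` (levels `q ≥ 1`). -/
noncomputable def qbdKernel (A0 A1 A2 C0 C1 : Matrix (Fin 2) (Fin 2) ℝ) :
    (Fin 2 × ℕ) → (Fin 2 × ℕ) → ℝ := fun x y =>
  if x.2 = 0 then
    (if y.2 = 0 then C1 x.1 y.1 else if y.2 = 1 then C0 x.1 y.1 else 0)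
  else
    (if y.2 + 1 = x.2 then A2 x.1 y.1
     else if y.2 = x.2 then A1 x.1 y.1
     else if y.2 = x.2 + 1 then A0 x.1 y.1 else 0)

/-- `n`-step transition probabilities of a kernel on a countable state space. -/
noncomputable def kernelPow (T : (Fin 2 × ℕ) → (Fin 2 × ℕ) → ℝ) :
    ℕ → (Fin 2 × ℕ) → (Fin 2 × ℕ) → ℝ
  | 0 => fun x y => if x = y then 1 else 0
  | n + 1 => fun x y => ∑' z : Fin 2 × ℕ, kernelPow T n x z * T z y

open Filter Topology

section Kernel

variable {T : Fin 2 × ℕ → Fin 2 × ℕ → ℝ}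

def IsAbsorbing (T : Fin 2 × ℕ → Fin 2 × ℕ → ℝ) (S : Set (Fin 2 × ℕ)) : Prop :=
  ∀ x ∈ S, ∀ y, T x y ≠ 0 → y ∈ S

theorem IsAbsorbing.kernelPow_eq_zero {S : Set (Fin 2 × ℕ)} (hS : IsAbsorbing T S)
    {x : Fin 2 × ℕ} (hx : x ∈ S) (n : ℕ) {y : Fin 2 × ℕ} (hy : y ∉ S) :
    kernelPow T n x y = 0 := by
  induction n generalizing y with
  | zero => exact if_neg fun h : x = y => hy (h ▸ hx)
  | succ n ih =>
    refine (tsum_congr fun z => ?_).trans tsum_zero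
    by_cases hz : z ∈ S
    · rw [not_imp_comm.1 (hS z hz y) hy, mul_zero]
    · rw [ih hz, zero_mul]

theorem IsAbsorbing.mem_of_irreducible {S : Set (Fin 2 × ℕ)} (hS : IsAbsorbing T S)
    (hirr : ∀ x y, ∃ n, 0 < kernelPow T n x y) {x : Fin 2 × ℕ} (hx : x ∈ S)
    (y : Fin 2 × ℕ) : y ∈ S := by
  by_contra hy
  obtain ⟨n, hn⟩ := hirr x y
  exact hn.ne' (hS.kernelPow_eq_zero hx n hy)

theorem kernelPow_nonneg (hT : ∀ x y, 0 ≤ T x y) (n : ℕ) (x y : Fin 2 × ℕ) :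
    0 ≤ kernelPow T n x y := by
  induction n generalizing y with
  | zero => simp only [kernelPow]; split_ifs <;> norm_num
  | succ n ih => exact tsum_nonneg fun z => mul_nonneg (ih z) (hT z y)

theorem mul_kernelPow_le_of_stationary {π : Fin 2 × ℕ → ℝ} (hT0 : ∀ x y, 0 ≤ T x y)
    (hT1 : ∀ x y, T x y ≤ 1) (hπ0 : ∀ x, 0 ≤ π x) (hπ : Summable π)
    (hstat : ∀ y, ∑' x, π x * T x y = π y) (n : ℕ) (x y : Fin 2 × ℕ) :
    π x * kernelPow T n x y ≤ π y := by
  induction n generalizing y with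
  | zero =>
    simp only [kernelPow]
    split_ifs with h
    · rw [h, mul_one]
    · rw [mul_zero]; exact hπ0 y
  | succ n ih =>
    have hle : ∀ z, π x * (kernelPow T n x z * T z y) ≤ π z * T z y := fun z => by
      rw [← mul_assoc]; exact mul_le_mul_of_nonneg_right (ih z) (hT0 z y)
    have hsum : Summable fun z => π z * T z y :=
      hπ.of_nonneg_of_le (fun z => mul_nonneg (hπ0 z) (hT0 z y))
        fun z => mul_le_of_le_one_right (hπ0 z) (hT1 z y)
    have hsum' : Summable fun z => π x * (kernelPow T n x z * T z y) :=
      hsum.of_nonneg_of_le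
        (fun z => mul_nonneg (hπ0 x) (mul_nonneg (kernelPow_nonneg hT0 n x z) (hT0 z y))) hle
    calc π x * kernelPow T (n + 1) x y = ∑' z, π x * (kernelPow T n x z * T z y) :=
          tsum_mul_left.symm
      _ ≤ ∑' z, π z * T z y := hsum'.tsum_le_tsum hle hsum
      _ = π y := hstat y

theorem pos_of_irreducible_of_stationary {π : Fin 2 × ℕ → ℝ} (hT0 : ∀ x y, 0 ≤ T x y)
    (hT1 : ∀ x y, T x y ≤ 1) (hirr : ∀ x y, ∃ n, 0 < kernelPow T n x y)
    (hπ0 : ∀ x, 0 ≤ π x) (hπ1 : HasSum π 1) (hstat : ∀ y, ∑' x, π x * T x y = π y)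
    (y : Fin 2 × ℕ) : 0 < π y := by
  obtain ⟨x, hx⟩ : ∃ x, 0 < π x := by
    by_contra! h
    have hzero : π = 0 := funext fun x => le_antisymm (h x) (hπ0 x)
    exact one_ne_zero (hπ1.unique (hzero ▸ hasSum_zero))
  obtain ⟨n, hn⟩ := hirr x y
  exact (mul_pos hx hn).trans_le
    (mul_kernelPow_le_of_stationary hT0 hT1 hπ0 hπ1.summable hstat n x y)

end Kernel

section QBDKernel

variable {A0 A1 A2 C0 C1 : Matrix (Fin 2) (Fin 2) ℝ}

theorem qbdKernel_nonneg (hA0 : ∀ c d, 0 ≤ A0 c d) (hA1 : ∀ c d, 0 ≤ A1 c d)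
    (hA2 : ∀ c d, 0 ≤ A2 c d) (hC0 : ∀ c d, 0 ≤ C0 c d) (hC1 : ∀ c d, 0 ≤ C1 c d)
    (x y : Fin 2 × ℕ) : 0 ≤ qbdKernel A0 A1 A2 C0 C1 x y := by
  unfold qbdKernel
  split_ifs
  all_goals first
    | exact le_rfl | exact hA0 _ _ | exact hA1 _ _ | exact hA2 _ _ | exact hC0 _ _
    | exact hC1 _ _

theorem qbdKernel_le_one (hA0 : ∀ c d, 0 ≤ A0 c d) (hA1 : ∀ c d, 0 ≤ A1 c d)
    (hA2 : ∀ c d, 0 ≤ A2 c d) (hC0 : ∀ c d, 0 ≤ C0 c d) (hC1 : ∀ c d, 0 ≤ C1 c d)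
    (hCrow : ∀ c, ∑ d, (C1 + C0) c d = 1) (hArow : ∀ c, ∑ d, (A2 + A1 + A0) c d = 1)
    (x y : Fin 2 × ℕ) : qbdKernel A0 A1 A2 C0 C1 x y ≤ 1 := by
  obtain ⟨c, -⟩ := x
  obtain ⟨d, -⟩ := y
  have hA : (A2 + A1 + A0) c d ≤ 1 := hArow c ▸ Finset.single_le_sum
    (fun e _ => add_nonneg (add_nonneg (hA2 c e) (hA1 c e)) (hA0 c e)) (Finset.mem_univ d)
  have hC : (C1 + C0) c d ≤ 1 := hCrow c ▸ Finset.single_le_sum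
    (fun e _ => add_nonneg (hC1 c e) (hC0 c e)) (Finset.mem_univ d)
  simp only [Matrix.add_apply] at hA hC
  simp only [qbdKernel]
  split_ifs <;> linarith [hA0 c d, hA1 c d, hA2 c d, hC0 c d, hC1 c d]

theorem qbdKernel_ne_zero_cases {c e : Fin 2} {l m : ℕ} (hl : l ≠ 0)
    (h : qbdKernel A0 A1 A2 C0 C1 (c, l) (e, m) ≠ 0) :
    (m + 1 = l ∧ A2 c e ≠ 0) ∨ (m = l ∧ A1 c e ≠ 0) ∨ (m = l + 1 ∧ A0 c e ≠ 0) := by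
  simp only [qbdKernel, hl, if_false] at h
  split_ifs at h <;> simp_all

theorem qbdKernel_balance {π : Fin 2 × ℕ → ℝ}
    (hstat : ∀ y, ∑' x, π x * qbdKernel A0 A1 A2 C0 C1 x y = π y) {q : ℕ} (hq : q ≠ 0) :
    (fun d => π (d, q + 1)) = (fun c => π (c, q)) ᵥ* A0 + (fun c => π (c, q + 1)) ᵥ* A1
      + (fun c => π (c, q + 2)) ᵥ* A2 := by
  funext d
  rw [← hstat, tsum_eq_sum (s := Finset.univ ×ˢ {q, q + 1, q + 2})]
  · simp [Finset.sum_product, qbdKernel, hq, vecMul, dotProduct, Finset.sum_add_distrib,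
      add_assoc]
  · rintro ⟨c, l⟩ hl
    simp only [Finset.mem_product, Finset.mem_univ, Finset.mem_insert, Finset.mem_singleton,
      true_and, not_or] at hl
    simp only [qbdKernel]
    split_ifs <;> first | exact mul_zero _ | contradiction | omega

end QBDKernel

section QBDAbsorbing

variable {A0 A1 A2 C0 C1 : Matrix (Fin 2) (Fin 2) ℝ}

theorem isAbsorbing_qbdKernel_of_A2_eq_zero (h2 : ∀ c e, A2 c e = 0) :
    IsAbsorbing (qbdKernel A0 A1 A2 C0 C1) {x | 1 ≤ x.2} := by
  rintro ⟨c, l⟩ (hl : 1 ≤ l) ⟨e, m⟩ h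
  rcases qbdKernel_ne_zero_cases (by omega) h with ⟨-, h'⟩ | ⟨rfl, -⟩ | ⟨rfl, -⟩
  · exact absurd (h2 c e) h'
  · exact hl
  · exact Nat.le_add_left 1 l

theorem isAbsorbing_qbdKernel_channel {d : Fin 2} (h2 : ∀ e, A2 d e = 0)
    (h1 : ∀ e ≠ d, A1 d e = 0) (h0 : ∀ e ≠ d, A0 d e = 0) :
    IsAbsorbing (qbdKernel A0 A1 A2 C0 C1) {x | x.1 = d ∧ 1 ≤ x.2} := by
  rintro ⟨c, l⟩ ⟨rfl, hl : 1 ≤ l⟩ ⟨e, m⟩ h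
  refine ⟨by_contra fun he => ?_, ?_⟩
  · rcases qbdKernel_ne_zero_cases (by omega) h with ⟨-, h'⟩ | ⟨-, h'⟩ | ⟨-, h'⟩
    exacts [h' (h2 e), h' (h1 e he), h' (h0 e he)]
  · rcases qbdKernel_ne_zero_cases (by omega) h with ⟨-, h'⟩ | ⟨rfl, -⟩ | ⟨rfl, -⟩
    exacts [absurd (h2 e) h', hl, Nat.le_add_left 1 l]

theorem isAbsorbing_qbdKernel_channel_or_upper {d : Fin 2} (h2 : ∀ e, A2 d e = 0)
    (h1 : ∀ e ≠ d, A1 d e = 0) (h2' : ∀ e ≠ d, ∀ e' ≠ d, A2 e e' = 0) :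
    IsAbsorbing (qbdKernel A0 A1 A2 C0 C1) {x | 1 ≤ x.2 ∧ (x.1 = d ∨ 2 ≤ x.2)} := by
  rintro ⟨c, l⟩ ⟨hl : 1 ≤ l, hcl : c = d ∨ 2 ≤ l⟩ ⟨e, m⟩ h
  show 1 ≤ m ∧ (e = d ∨ 2 ≤ m)
  rcases qbdKernel_ne_zero_cases (by omega) h with ⟨rfl, h'⟩ | ⟨rfl, h'⟩ | ⟨rfl, -⟩
  · rcases hcl with rfl | hl2
    · exact absurd (h2 e) h'
    · by_cases he : e = d
      · exact ⟨by omega, Or.inl he⟩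
      · by_cases hc : c = d
        · exact absurd (hc ▸ h2 e) h'
        · exact absurd (h2' c hc e he) h'
  · by_cases he : e = d
    · exact ⟨hl, Or.inl he⟩
    · rcases hcl with rfl | hl2
      · exact absurd (h1 e he) h'
      · exact ⟨hl, Or.inr hl2⟩
  · exact ⟨by omega, Or.inr (by omega)⟩

theorem exists_A2_ne_zero_of_irreducible
    (hirr : ∀ x y, ∃ n, 0 < kernelPow (qbdKernel A0 A1 A2 C0 C1) n x y) :
    ∃ c e, A2 c e ≠ 0 := by
  by_contra! h2
  have h := (isAbsorbing_qbdKernel_of_A2_eq_zero h2).mem_of_irreducible hirr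
    (x := (0, 1)) (show 1 ≤ 1 from le_rfl) (0, 0)
  simp at h

end QBDAbsorbing

section NonnegMatrix

variable {m : Type*} [Fintype m]

theorem mul_apply_nonneg_of_nonneg {S X : Matrix m m ℝ} (hS : ∀ i j, 0 ≤ S i j)
    (hX : ∀ i j, 0 ≤ X i j) (i j : m) : 0 ≤ (S * X) i j :=
  Finset.sum_nonneg fun k _ => mul_nonneg (hS i k) (hX k j)

theorem mul_apply_le_mul_apply {S S' X X' : Matrix m m ℝ} (hS : ∀ i j, 0 ≤ S i j)
    (hSS' : ∀ i j, S i j ≤ S' i j) (hX : ∀ i j, 0 ≤ X i j)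
    (hXX' : ∀ i j, X i j ≤ X' i j) (i j : m) : (S * X) i j ≤ (S' * X') i j :=
  Finset.sum_le_sum fun k _ =>
    mul_le_mul (hSS' i k) (hXX' k j) (hX k j) ((hS i k).trans (hSS' i k))

theorem vecMul_le_vecMul_of_nonneg {v w : m → ℝ} (hvw : v ≤ w) {M : Matrix m m ℝ}
    (hM : ∀ i j, 0 ≤ M i j) : v ᵥ* M ≤ w ᵥ* M :=
  fun j => dotProduct_le_dotProduct_of_nonneg_right hvw fun i => hM i j

theorem mul_apply_eq_zero_of_dotProduct_mulVec_one_eq_zero {v : m → ℝ} (hv : 0 ≤ v)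
    {M : Matrix m m ℝ} (hM : ∀ i j, 0 ≤ M i j) (h : v ⬝ᵥ (M *ᵥ 1) = 0) (i j : m) :
    v i * M i j = 0 := by
  have hrow : ∀ k, 0 ≤ v k * (M *ᵥ 1) k := fun k =>
    mul_nonneg (hv k) (Finset.sum_nonneg fun l _ => by simpa using hM k l)
  have hi : v i * (M *ᵥ 1) i = 0 := (Finset.sum_eq_zero_iff_of_nonneg fun k _ => hrow k).1 h i
    (Finset.mem_univ i)
  simp only [mulVec, dotProduct, Pi.one_apply, mul_one, Finset.mul_sum] at hi
  exact (Finset.sum_eq_zero_iff_of_nonneg fun k _ => mul_nonneg (hv i) (hM i k)).1 hi j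
    (Finset.mem_univ j)

end NonnegMatrix

section RateMatrix

variable {m : Type*} [Fintype m] [DecidableEq m] {A0 A1 A2 R : Matrix m m ℝ}

def qbdRateMap (A0 A1 A2 S : Matrix m m ℝ) : Matrix m m ℝ := A0 + S * A1 + S ^ 2 * A2

theorem qbdRateMap_zero : qbdRateMap A0 A1 A2 0 = A0 := by simp [qbdRateMap]

theorem qbdRateMap_mono (hA1 : ∀ i j, 0 ≤ A1 i j) (hA2 : ∀ i j, 0 ≤ A2 i j)
    {S S' : Matrix m m ℝ} (hS : ∀ i j, 0 ≤ S i j) (hSS' : ∀ i j, S i j ≤ S' i j)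
    (i j : m) :
    qbdRateMap A0 A1 A2 S i j ≤ qbdRateMap A0 A1 A2 S' i j := by
  have h1 := mul_apply_le_mul_apply hS hSS' hA1 (fun _ _ => le_rfl) i j
  have h2 := mul_apply_le_mul_apply hS hSS' (mul_apply_nonneg_of_nonneg hS hA2)
    (mul_apply_le_mul_apply hS hSS' hA2 (fun _ _ => le_rfl)) i j
  simp only [qbdRateMap, Matrix.add_apply, pow_two, Matrix.mul_assoc]
  linarith

theorem qbdRateMap_iterate_nonneg (hA0 : ∀ i j, 0 ≤ A0 i j) (hA1 : ∀ i j, 0 ≤ A1 i j)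
    (hA2 : ∀ i j, 0 ≤ A2 i j) (k : ℕ) (i j : m) : 0 ≤ (qbdRateMap A0 A1 A2)^[k] 0 i j := by
  induction k generalizing i j with
  | zero => exact le_rfl
  | succ k ih =>
    rw [Function.iterate_succ_apply']
    calc 0 ≤ qbdRateMap A0 A1 A2 0 i j := qbdRateMap_zero (A1 := A1) (A2 := A2) ▸ hA0 i j
      _ ≤ _ := qbdRateMap_mono hA1 hA2 (fun _ _ => le_rfl) ih i j

theorem qbdRateMap_iterate_le_succ (hA0 : ∀ i j, 0 ≤ A0 i j) (hA1 : ∀ i j, 0 ≤ A1 i j)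
    (hA2 : ∀ i j, 0 ≤ A2 i j) (k : ℕ) (i j : m) :
    (qbdRateMap A0 A1 A2)^[k] 0 i j ≤ (qbdRateMap A0 A1 A2)^[k + 1] 0 i j := by
  induction k generalizing i j with
  | zero => exact qbdRateMap_iterate_nonneg hA0 hA1 hA2 1 i j
  | succ k ih =>
    rw [Function.iterate_succ_apply', Function.iterate_succ_apply' _ (k + 1)]
    exact qbdRateMap_mono hA1 hA2 (qbdRateMap_iterate_nonneg hA0 hA1 hA2 k) ih i j

theorem qbdRateMap_iterate_le (hA0 : ∀ i j, 0 ≤ A0 i j) (hA1 : ∀ i j, 0 ≤ A1 i j)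
    (hA2 : ∀ i j, 0 ≤ A2 i j) (hR0 : ∀ i j, 0 ≤ R i j) (hR : qbdRateMap A0 A1 A2 R = R)
    (k : ℕ) (i j : m) : (qbdRateMap A0 A1 A2)^[k] 0 i j ≤ R i j := by
  induction k generalizing i j with
  | zero => exact hR0 i j
  | succ k ih =>
    rw [Function.iterate_succ_apply', ← hR]
    exact qbdRateMap_mono hA1 hA2 (qbdRateMap_iterate_nonneg hA0 hA1 hA2 k) ih i j

theorem le_of_qbdRateMap_eq_self (hA0 : ∀ i j, 0 ≤ A0 i j) (hA1 : ∀ i j, 0 ≤ A1 i j)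
    (hA2 : ∀ i j, 0 ≤ A2 i j) (hR0 : ∀ i j, 0 ≤ R i j) (hR : qbdRateMap A0 A1 A2 R = R)
    (i j : m) : A0 i j ≤ R i j := by
  simpa [qbdRateMap_zero] using qbdRateMap_iterate_le hA0 hA1 hA2 hR0 hR 1 i j

theorem continuous_qbdRateMap : Continuous (qbdRateMap A0 A1 A2) := by
  unfold qbdRateMap; fun_prop

theorem tendsto_qbdRateMap_iterate (hA0 : ∀ i j, 0 ≤ A0 i j) (hA1 : ∀ i j, 0 ≤ A1 i j)
    (hA2 : ∀ i j, 0 ≤ A2 i j) (hR0 : ∀ i j, 0 ≤ R i j) (hR : qbdRateMap A0 A1 A2 R = R)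
    (hmin : ∀ S : Matrix m m ℝ, (∀ i j, 0 ≤ S i j) → qbdRateMap A0 A1 A2 S = S →
      ∀ i j, R i j ≤ S i j) :
    Tendsto (fun k => (qbdRateMap A0 A1 A2)^[k] 0) atTop (𝓝 R) := by
  set F := qbdRateMap A0 A1 A2
  have hbdd : ∀ i j, BddAbove (Set.range fun k => F^[k] 0 i j) := fun i j =>
    ⟨R i j, Set.forall_mem_range.2 fun k => qbdRateMap_iterate_le hA0 hA1 hA2 hR0 hR k i j⟩
  set L : Matrix m m ℝ := Matrix.of fun i j => ⨆ k, F^[k] 0 i j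
  have hL : Tendsto (fun k => F^[k] 0) atTop (𝓝 L) :=
    tendsto_pi_nhds.2 fun i => tendsto_pi_nhds.2 fun j => tendsto_atTop_ciSup
      (monotone_nat_of_le_succ (qbdRateMap_iterate_le_succ hA0 hA1 hA2 · i j)) (hbdd i j)
  have hLfix : F L = L := by
    refine tendsto_nhds_unique ?_ ((tendsto_add_atTop_iff_nat 1).2 hL)
    simpa only [Function.iterate_succ_apply', Function.comp_def] using
      (continuous_qbdRateMap.tendsto L).comp hL
  have hLR : ∀ i j, L i j ≤ R i j := fun i j =>
    ciSup_le fun k => qbdRateMap_iterate_le hA0 hA1 hA2 hR0 hR k i j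
  have hL0 : ∀ i j, 0 ≤ L i j := fun i j =>
    le_ciSup_of_le (hbdd i j) 0 le_rfl
  convert hL
  ext i j
  exact le_antisymm (hmin L hL0 hLfix i j) (hLR i j)

end RateMatrix

def qbdDefect {m : Type*} [Fintype m] (x : ℕ → m → ℝ) (R : Matrix m m ℝ) (n : ℕ) : m → ℝ :=
  x (n + 1) - x n ᵥ* R

section LevelSequence

variable {m : Type*} [Fintype m] [DecidableEq m] {A0 A1 A2 R : Matrix m m ℝ}
  {x : ℕ → m → ℝ}

theorem vecMul_qbdRateMap_iterate_le (hA0 : ∀ i j, 0 ≤ A0 i j) (hA1 : ∀ i j, 0 ≤ A1 i j)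
    (hA2 : ∀ i j, 0 ≤ A2 i j) (hx0 : ∀ n, 0 ≤ x n)
    (hx : ∀ n, x (n + 1) = x n ᵥ* A0 + x (n + 1) ᵥ* A1 + x (n + 2) ᵥ* A2) (k n : ℕ) :
    x n ᵥ* (qbdRateMap A0 A1 A2)^[k] 0 ≤ x (n + 1) := by
  induction k generalizing n with
  | zero => simpa using hx0 (n + 1)
  | succ k ih =>
    set S := (qbdRateMap A0 A1 A2)^[k] 0
    have h1 : x n ᵥ* S ᵥ* A1 ≤ x (n + 1) ᵥ* A1 := vecMul_le_vecMul_of_nonneg (ih n) hA1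
    have h2 : x n ᵥ* S ᵥ* S ᵥ* A2 ≤ x (n + 2) ᵥ* A2 := vecMul_le_vecMul_of_nonneg
      ((vecMul_le_vecMul_of_nonneg (ih n) (qbdRateMap_iterate_nonneg hA0 hA1 hA2 k)).trans
        (ih (n + 1))) hA2
    rw [Function.iterate_succ_apply', hx n, qbdRateMap, vecMul_add, vecMul_add, pow_two,
      ← vecMul_vecMul, ← vecMul_vecMul, ← vecMul_vecMul]
    gcongr

theorem vecMul_le_of_tendsto_qbdRateMap_iterate (hA0 : ∀ i j, 0 ≤ A0 i j)
    (hA1 : ∀ i j, 0 ≤ A1 i j) (hA2 : ∀ i j, 0 ≤ A2 i j) (hx0 : ∀ n, 0 ≤ x n)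
    (hx : ∀ n, x (n + 1) = x n ᵥ* A0 + x (n + 1) ᵥ* A1 + x (n + 2) ᵥ* A2)
    (hR : Tendsto (fun k => (qbdRateMap A0 A1 A2)^[k] 0) atTop (𝓝 R)) (n : ℕ) :
    x n ᵥ* R ≤ x (n + 1) :=
  le_of_tendsto' (((continuous_const.matrix_vecMul continuous_id).tendsto R).comp hR)
    fun k => vecMul_qbdRateMap_iterate_le hA0 hA1 hA2 hx0 hx k n

theorem tendsto_pow_atTop_nhds_zero_of_vecMul_le (hR0 : ∀ i j, 0 ≤ R i j)
    (hxR : ∀ n, x n ᵥ* R ≤ x (n + 1)) (hpos : ∀ c, 0 < x 0 c)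
    (hlim : Tendsto x atTop (𝓝 0)) : Tendsto (R ^ ·) atTop (𝓝 0) := by
  have hpow : ∀ k, x 0 ᵥ* R ^ k ≤ x k := by
    intro k
    induction k with
    | zero => simp
    | succ k ih =>
      rw [pow_succ, ← vecMul_vecMul]
      exact (vecMul_le_vecMul_of_nonneg ih hR0).trans (hxR k)
  refine tendsto_pi_nhds.2 fun c => tendsto_pi_nhds.2 fun d => ?_
  refine squeeze_zero (fun k => pow_apply_nonneg hR0 k c d) (fun k => ?_)
    (by simpa using ((tendsto_pi_nhds.1 hlim d).div_const (x 0 c)))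
  rw [le_div_iff₀' (hpos c)]
  calc x 0 c * (R ^ k) c d ≤ (x 0 ᵥ* R ^ k) d :=
        Finset.single_le_sum (f := fun c' => x 0 c' * (R ^ k) c' d)
          (fun c' _ => mul_nonneg (hpos c').le (pow_apply_nonneg hR0 k c' d)) (Finset.mem_univ c)
    _ ≤ x k d := hpow k d

theorem mulVec_mulVec_one_eq_of_tendsto_pow (hrow : (A2 + A1 + A0) *ᵥ 1 = 1)
    (hR : qbdRateMap A0 A1 A2 R = R) (hRk : Tendsto (R ^ ·) atTop (𝓝 0)) :
    R *ᵥ (A2 *ᵥ 1) = A0 *ᵥ 1 := by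
  set v := A0 *ᵥ 1 - R *ᵥ (A2 *ᵥ 1)
  have hRv : R *ᵥ v = v := by
    have h := congrArg (· *ᵥ (1 : m → ℝ)) hR
    have hA1 : A1 *ᵥ 1 = 1 - A2 *ᵥ 1 - A0 *ᵥ 1 := by
      rw [add_mulVec, add_mulVec] at hrow
      linear_combination hrow
    simp only [qbdRateMap, add_mulVec, pow_two, ← mulVec_mulVec, hA1, mulVec_sub] at h
    simp only [v, mulVec_sub]
    linear_combination -h
  have hpow : ∀ k, R ^ k *ᵥ v = v := by
    intro k
    induction k with
    | zero => simp
    | succ k ih => rw [pow_succ, ← mulVec_mulVec, hRv, ih]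
  have hlim : Tendsto (fun k => R ^ k *ᵥ v) atTop (𝓝 (0 *ᵥ v)) :=
    ((continuous_id.matrix_mulVec continuous_const).tendsto 0).comp hRk
  simp only [hpow, zero_mulVec] at hlim
  exact (sub_eq_zero.1 (tendsto_nhds_unique tendsto_const_nhds hlim)).symm

theorem qbdDefect_eq (hx : ∀ n, x (n + 1) = x n ᵥ* A0 + x (n + 1) ᵥ* A1 + x (n + 2) ᵥ* A2)
    (hR : qbdRateMap A0 A1 A2 R = R) (n : ℕ) :
    qbdDefect x R n = qbdDefect x R n ᵥ* (A1 + R * A2) + qbdDefect x R (n + 1) ᵥ* A2 := by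
  have hxR : x n ᵥ* R = x n ᵥ* A0 + x n ᵥ* R ᵥ* A1 + x n ᵥ* R ᵥ* R ᵥ* A2 := by
    conv_lhs => rw [← hR]
    simp only [qbdRateMap, vecMul_add, pow_two, vecMul_vecMul]
  simp only [qbdDefect, sub_vecMul, vecMul_add, ← vecMul_vecMul]
  linear_combination hx n - hxR

theorem qbdDefect_dotProduct_succ (hrow : (A2 + A1 + A0) *ᵥ 1 = 1)
    (hdown : R *ᵥ (A2 *ᵥ 1) = A0 *ᵥ 1)
    (hx : ∀ n, x (n + 1) = x n ᵥ* A0 + x (n + 1) ᵥ* A1 + x (n + 2) ᵥ* A2)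
    (hR : qbdRateMap A0 A1 A2 R = R) (n : ℕ) :
    qbdDefect x R (n + 1) ⬝ᵥ (A2 *ᵥ 1) = qbdDefect x R n ⬝ᵥ (A2 *ᵥ 1) := by
  have h := congrArg (· ⬝ᵥ (1 : m → ℝ)) (qbdDefect_eq hx hR n)
  simp only [add_dotProduct, ← dotProduct_mulVec, add_mulVec, ← mulVec_mulVec, hdown] at h
  have hA1 : A1 *ᵥ 1 = 1 - A2 *ᵥ 1 - A0 *ᵥ 1 := by
    rw [add_mulVec, add_mulVec] at hrow
    linear_combination hrow
  rw [hA1, dotProduct_add, dotProduct_sub, dotProduct_sub] at h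
  linarith

theorem qbdDefect_dotProduct_eq_zero (hrow : (A2 + A1 + A0) *ᵥ 1 = 1)
    (hdown : R *ᵥ (A2 *ᵥ 1) = A0 *ᵥ 1)
    (hx : ∀ n, x (n + 1) = x n ᵥ* A0 + x (n + 1) ᵥ* A1 + x (n + 2) ᵥ* A2)
    (hR : qbdRateMap A0 A1 A2 R = R) (hlim : Tendsto x atTop (𝓝 0)) (n : ℕ) :
    qbdDefect x R n ⬝ᵥ (A2 *ᵥ 1) = 0 := by
  have hconst : ∀ k, qbdDefect x R k ⬝ᵥ (A2 *ᵥ 1) = qbdDefect x R 0 ⬝ᵥ (A2 *ᵥ 1) := by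
    intro k
    induction k with
    | zero => rfl
    | succ k ih => exact (qbdDefect_dotProduct_succ hrow hdown hx hR k).trans ih
  have hδ : Tendsto (qbdDefect x R) atTop (𝓝 0) := by
    show Tendsto (fun k => x (k + 1) - x k ᵥ* R) atTop (𝓝 0)
    simpa using (hlim.comp (tendsto_add_atTop_nat 1)).sub
      (((continuous_id.matrix_vecMul continuous_const).tendsto 0).comp hlim)
  have hw : Tendsto (fun k => qbdDefect x R k ⬝ᵥ (A2 *ᵥ 1)) atTop (𝓝 0) := by
    simpa [Function.comp_def] using
      ((continuous_id.dotProduct continuous_const).tendsto 0).comp hδ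
  rw [hconst n]
  exact tendsto_nhds_unique tendsto_const_nhds (hw.congr hconst)

theorem qbdDefect_mul_apply_eq_zero (hA2 : ∀ i j, 0 ≤ A2 i j)
    (hrow : (A2 + A1 + A0) *ᵥ 1 = 1) (hdown : R *ᵥ (A2 *ᵥ 1) = A0 *ᵥ 1)
    (hx : ∀ n, x (n + 1) = x n ᵥ* A0 + x (n + 1) ᵥ* A1 + x (n + 2) ᵥ* A2)
    (hR : qbdRateMap A0 A1 A2 R = R) (hlim : Tendsto x atTop (𝓝 0))
    (hxR : ∀ n, x n ᵥ* R ≤ x (n + 1)) (n : ℕ) (c e : m) :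
    qbdDefect x R n c * A2 c e = 0 :=
  mul_apply_eq_zero_of_dotProduct_mulVec_one_eq_zero (sub_nonneg.2 (hxR n)) hA2
    (qbdDefect_dotProduct_eq_zero hrow hdown hx hR hlim n) c e

theorem qbdDefect_eq_vecMul
    (hx : ∀ n, x (n + 1) = x n ᵥ* A0 + x (n + 1) ᵥ* A1 + x (n + 2) ᵥ* A2)
    (hR : qbdRateMap A0 A1 A2 R = R) (hδA2 : ∀ n c e, qbdDefect x R n c * A2 c e = 0)
    (n : ℕ) : qbdDefect x R n = qbdDefect x R n ᵥ* (A1 + R * A2) := by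
  have hnext : qbdDefect x R (n + 1) ᵥ* A2 = 0 := by
    ext e
    simp only [vecMul, dotProduct, hδA2, Finset.sum_const_zero, Pi.zero_apply]
  simpa [hnext] using qbdDefect_eq hx hR n

end LevelSequence

theorem eq_zero_of_eq_vecMul_of_irreducible {A0 A1 A2 C0 C1 R : Matrix (Fin 2) (Fin 2) ℝ}
    (hirr : ∀ x y, ∃ n, 0 < kernelPow (qbdKernel A0 A1 A2 C0 C1) n x y)
    (hA0 : ∀ i j, 0 ≤ A0 i j) (hA1 : ∀ i j, 0 ≤ A1 i j) (hA2 : ∀ i j, 0 ≤ A2 i j)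
    (hR0 : ∀ i j, 0 ≤ R i j) (hA0R : ∀ i j, A0 i j ≤ R i j)
    {δ : Fin 2 → ℝ} (hδ0 : 0 ≤ δ) (hδA2 : ∀ c e, δ c * A2 c e = 0)
    (hδ : δ = δ ᵥ* (A1 + R * A2)) : δ = 0 := by
  by_contra hne
  obtain ⟨d, hd⟩ : ∃ d, 0 < δ d := by
    by_contra! h
    exact hne (funext fun c => le_antisymm (h c) (hδ0 c))
  have h2 : ∀ e, A2 d e = 0 := fun e => (mul_eq_zero.1 (hδA2 d e)).resolve_left hd.ne'
  obtain ⟨c, e, hce⟩ := exists_A2_ne_zero_of_irreducible hirr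
  have hc : δ c = 0 := (mul_eq_zero.1 (hδA2 c e)).resolve_right hce
  have hcd : c ≠ d := by rintro rfl; exact hd.ne' hc
  have hother : ∀ b ≠ d, b = c := by omega
  have hRA2 : ∀ i j, 0 ≤ (R * A2) i j := mul_apply_nonneg_of_nonneg hR0 hA2
  have hM : (A1 + R * A2) d c ≤ 0 := by
    refine nonpos_of_mul_nonpos_right (hc ▸ ?_) hd
    conv_rhs => rw [hδ]
    exact Finset.single_le_sum (f := fun b => δ b * (A1 + R * A2) b c)
      (fun b _ => mul_nonneg (hδ0 b) (add_nonneg (hA1 b c) (hRA2 b c))) (Finset.mem_univ d)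
  rw [Matrix.add_apply] at hM
  have h1 : A1 d c = 0 := by linarith [hA1 d c, hRA2 d c]
  have hRc : R d c * A2 c c ≤ 0 := by
    refine le_trans ?_ (show (R * A2) d c ≤ 0 by linarith [hA1 d c])
    exact Finset.single_le_sum (f := fun b => R d b * A2 b c)
      (fun b _ => mul_nonneg (hR0 d b) (hA2 b c)) (Finset.mem_univ c)
  -- Phase `d` has no downward moves and cannot switch to `c` within a level, so the states
  -- reachable from `(d, 1)` stay above level `0`.
  obtain ⟨S, hS, hd1, hd0⟩ :
      ∃ S, IsAbsorbing (qbdKernel A0 A1 A2 C0 C1) S ∧ (d, 1) ∈ S ∧ (d, 0) ∉ S := by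
    rcases mul_eq_zero.1 (le_antisymm hRc (mul_nonneg (hR0 d c) (hA2 c c))) with hR | hA
    · have h0 : A0 d c = 0 := le_antisymm (hR ▸ hA0R d c) (hA0 d c)
      exact ⟨_, isAbsorbing_qbdKernel_channel h2 (fun b hb => hother b hb ▸ h1)
        (fun b hb => hother b hb ▸ h0), ⟨rfl, le_rfl⟩, by simp⟩
    · exact ⟨_, isAbsorbing_qbdKernel_channel_or_upper h2 (fun b hb => hother b hb ▸ h1)
        (fun b hb b' hb' => hother b hb ▸ hother b' hb' ▸ hA), ⟨le_rfl, Or.inl rfl⟩,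
        by simp⟩
  exact hd0 (hS.mem_of_irreducible hirr hd1 _)

theorem stmt0
    (A0 A1 A2 C0 C1 : Matrix (Fin 2) (Fin 2) ℝ)
    (hA0 : ∀ c d, 0 ≤ A0 c d) (hA1 : ∀ c d, 0 ≤ A1 c d) (hA2 : ∀ c d, 0 ≤ A2 c d)
    (hC0 : ∀ c d, 0 ≤ C0 c d) (hC1 : ∀ c d, 0 ≤ C1 c d)
    (hCrow : ∀ c, ∑ d, (C1 + C0) c d = 1)
    (hArow : ∀ c, ∑ d, (A2 + A1 + A0) c d = 1)
    -- the kernel is irreducible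
    (hirr : ∀ x y : Fin 2 × ℕ, ∃ n : ℕ,
      0 < kernelPow (qbdKernel A0 A1 A2 C0 C1) n x y)
    -- π is a stationary probability distribution for T
    (π : Fin 2 × ℕ → ℝ)
    (hπ0 : ∀ x, 0 ≤ π x) (hπ1 : HasSum π 1)
    (hstat : ∀ y, ∑' x : Fin 2 × ℕ, π x * qbdKernel A0 A1 A2 C0 C1 x y = π y)
    -- R is a minimal nonnegative solution of A0 + R·A1 + R²·A2 = R
    (R : Matrix (Fin 2) (Fin 2) ℝ)
    (hR0 : ∀ i j, 0 ≤ R i j)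
    (hReq : A0 + R * A1 + R ^ 2 * A2 = R)
    (hRmin : ∀ S : Matrix (Fin 2) (Fin 2) ℝ, (∀ i j, 0 ≤ S i j) →
      A0 + S * A1 + S ^ 2 * A2 = S → ∀ i j, R i j ≤ S i j) :
    ∀ q : ℕ, 1 ≤ q →
      (fun c => π (c, q + 1)) = (fun c => π (c, q)) ᵥ* R := by
  intro q hq
  obtain ⟨n, rfl⟩ : ∃ n, q = n + 1 := ⟨q - 1, by omega⟩
  -- Shifting by one level makes the balance equations hold for every `n`.
  set x : ℕ → Fin 2 → ℝ := fun n c => π (c, n + 1)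
  have hT0 := qbdKernel_nonneg hA0 hA1 hA2 hC0 hC1
  have hT1 := qbdKernel_le_one hA0 hA1 hA2 hC0 hC1 hCrow hArow
  have hx : ∀ n, x (n + 1) = x n ᵥ* A0 + x (n + 1) ᵥ* A1 + x (n + 2) ᵥ* A2 := fun n =>
    qbdKernel_balance hstat n.succ_ne_zero
  have hx0 : ∀ n, 0 ≤ x n := fun n c => hπ0 (c, n + 1)
  have hxlim : Tendsto x atTop (𝓝 0) := tendsto_pi_nhds.2 fun c =>
    (hπ1.summable.comp_injective fun a b h => by simpa using h).tendsto_atTop_zero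
  have hxR := vecMul_le_of_tendsto_qbdRateMap_iterate hA0 hA1 hA2 hx0 hx
    (tendsto_qbdRateMap_iterate hA0 hA1 hA2 hR0 hReq hRmin)
  have hRk := tendsto_pow_atTop_nhds_zero_of_vecMul_le hR0 hxR
    (fun c => pos_of_irreducible_of_stationary hT0 hT1 hirr hπ0 hπ1 hstat (c, 1)) hxlim
  have hrow : (A2 + A1 + A0) *ᵥ 1 = 1 := funext fun c => by
    simpa [mulVec, dotProduct] using hArow c
  have hdown := mulVec_mulVec_one_eq_of_tendsto_pow hrow hReq hRk
  have hδA2 := qbdDefect_mul_apply_eq_zero hA2 hrow hdown hx hReq hxlim hxR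
  have hδ := qbdDefect_eq_vecMul hx hReq hδA2 n
  exact sub_eq_zero.1 (eq_zero_of_eq_vecMul_of_irreducible hirr hA0 hA1 hA2 hR0
    (le_of_qbdRateMap_eq_self hA0 hA1 hA2 hR0 hReq) (sub_nonneg.2 (hxR n)) (hδA2 n) hδ)
end

section
/- Suppose π is a stationary probability distribution for T, A2 is invertible, R is a 2×2 real matrix with nonnegative entries and spectral radius strictly less than 1 such that π_{q+1} = π_q · R for all q ≥ 1, and π_1 = π_0 · Z where Z = (I − C1) · A2⁻¹. Assume moreover that the matrix I + Z·(I − R)⁻¹ is invertible. Then π_0 = (β/(α+β), α/(α+β)) · (I + Z·(I − R)⁻¹)⁻¹. -/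
open Matrix

/-- The spectral radius of a real `2 × 2` matrix: the maximum of the absolute values
of its complex eigenvalues. -/
noncomputable def specRad (R : Matrix (Fin 2) (Fin 2) ℝ) : ℝ :=
  sSup {r : ℝ | ∃ μ : ℂ, μ ∈ spectrum ℂ (R.map (algebraMap ℝ ℂ)) ∧ r = ‖μ‖}

/-!
Summing the balance equations of `T` over all levels shows that the channel marginal
`σ = ∑_q π_q` is invariant under `P^N`; as `|1 - α - β| < 1`, the only invariant probability
vector of `P^N` is `(β, α) / (α + β)`. On the other hand the matrix-geometric form of `π` gives
`∑_{q ≥ 1} π_q = π_1 (I - R)⁻¹ = π_0 Z (I - R)⁻¹`, so that `σ = π_0 (I + Z (I - R)⁻¹)`.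
-/

theorem Matrix.vecMul_pow_of_vecMul_eq_smul {n R : Type*} [Fintype n] [DecidableEq n]
    [CommSemiring R] {M : Matrix n n R} {v : n → R} {c : R} (h : v ᵥ* M = c • v) (k : ℕ) :
    v ᵥ* M ^ k = c ^ k • v := by
  induction k with
  | zero => simp
  | succ k ih => rw [pow_succ, ← vecMul_vecMul, ih, smul_vecMul, h, smul_smul, pow_succ]

theorem Matrix.eq_vecMul_inv_of_vecMul_eq {n R : Type*} [Fintype n] [DecidableEq n] [CommRing R]
    {M : Matrix n n R} (hM : IsUnit M) {v w : n → R} (h : v ᵥ* M = w) : v = w ᵥ* M⁻¹ := by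
  rw [← h, vecMul_vecMul, mul_nonsing_inv _ ((isUnit_iff_isUnit_det M).mp hM), vecMul_one]

theorem HasSum.vecMul {ι m n R : Type*} [Fintype m] [CommSemiring R] [TopologicalSpace R]
    [IsTopologicalSemiring R] {f : ι → m → R} {a : m → R} (hf : HasSum f a) (M : Matrix m n R) :
    HasSum (fun i => f i ᵥ* M) (a ᵥ* M) :=
  hf.map M.vecMulLinear (continuous_id.matrix_vecMul continuous_const)

theorem eq_stationary_of_vecMul_pow_eq_self {α β : ℝ} (hα : 0 < α) (hβ : 0 < β)
    (hαβ : α + β < 2) {N : ℕ} (hN : N ≠ 0) {σ : Fin 2 → ℝ}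
    (hfix : σ ᵥ* !![1 - α, α; β, 1 - β] ^ N = σ) (hσ : σ 0 + σ 1 = 1) :
    σ = ![β / (α + β), α / (α + β)] := by
  set p : Fin 2 → ℝ := ![β / (α + β), α / (α + β)]
  set P : Matrix (Fin 2) (Fin 2) ℝ := !![1 - α, α; β, 1 - β]
  have hαβ0 : α + β ≠ 0 := by positivity
  have hp : p ᵥ* P = p := by
    ext j; fin_cases j <;> simp [p, P, vecMul, dotProduct] <;> field_simp <;> ring
  have he : ![1, -1] ᵥ* P = (1 - α - β) • ![1, -1] := by
    ext j; fin_cases j <;> simp [P, vecMul, dotProduct] <;> ring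
  have hp1 : p 0 + p 1 = 1 := by
    simp only [p, cons_val_zero, cons_val_one]
    rw [← add_div, add_comm β, div_self hαβ0]
  -- `σ - p` is a multiple of the left eigenvector `![1, -1]`, whose eigenvalue `1 - α - β` has
  -- modulus `< 1`, so it cannot survive `P ^ N`.
  have hdecomp : σ = p + (σ 0 - p 0) • ![1, -1] := by
    ext j
    fin_cases j
    · simp
    · simp only [Fin.mk_one, Pi.add_apply, Pi.smul_apply, cons_val_one, cons_val_fin_one, smul_eq_mul]
      linarith
  have hcontr : (1 - α - β) ^ N ≠ 1 := by
    refine ne_of_lt (lt_of_abs_lt ?_)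
    rw [abs_pow]
    exact pow_lt_one₀ (abs_nonneg _) (abs_lt.mpr ⟨by linarith, by linarith⟩) hN
  have h0 := congrFun hfix 0
  rw [hdecomp, add_vecMul, smul_vecMul,
    vecMul_pow_of_vecMul_eq_smul (hp.trans (one_smul ℝ p).symm),
    vecMul_pow_of_vecMul_eq_smul he] at h0
  simp only [one_pow, one_smul, Pi.add_apply, Pi.smul_apply, smul_eq_mul, cons_val_zero,
    mul_one] at h0
  have hσp : (σ 0 - p 0) * ((1 - α - β) ^ N - 1) = 0 := by linear_combination h0
  have hσp0 : σ 0 = p 0 :=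
    sub_eq_zero.mp ((mul_eq_zero.mp hσp).resolve_right (sub_ne_zero.mpr hcontr))
  rw [hdecomp, hσp0, sub_self, zero_smul, add_zero]

theorem isUnit_one_sub_of_specRad_lt_one {R : Matrix (Fin 2) (Fin 2) ℝ} (hR : specRad R < 1) :
    IsUnit (1 - R) := by
  by_contra hsing
  have hone : (1 : ℂ) ∈ spectrum ℂ (R.map (algebraMap ℝ ℂ)) := by
    rw [spectrum.mem_iff, map_one, ← Matrix.map_one (algebraMap ℝ ℂ) (map_zero _) (map_one _),
      ← Matrix.map_sub _ (map_sub _), isUnit_iff_isUnit_det, ← RingHom.mapMatrix_apply,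
      ← RingHom.map_det, isUnit_map_iff, ← isUnit_iff_isUnit_det]
    exact hsing
  have hbdd : BddAbove {r : ℝ | ∃ μ : ℂ, μ ∈ spectrum ℂ (R.map (algebraMap ℝ ℂ)) ∧ r = ‖μ‖} :=
    ((finite_spectrum _).image (‖·‖)).bddAbove.mono (by rintro r ⟨μ, hμ, rfl⟩; exact ⟨μ, hμ, rfl⟩)
  exact hR.not_ge (le_csSup hbdd ⟨1, hone, by simp⟩)

namespace QBD

def level (π : Fin 2 × ℕ → ℝ) (q : ℕ) : Fin 2 → ℝ := fun c => π (c, q)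

variable {π : Fin 2 × ℕ → ℝ}

theorem summable_level (hπ : Summable π) (k : ℕ) : Summable fun q => level π (q + k) :=
  (summable_nat_add_iff k).mpr
    (Pi.summable.mpr fun c => hπ.comp_injective (Prod.mk_right_injective c))

theorem tsum_level_add_eq (hπ : Summable π) (k : ℕ) :
    ∑' q, level π (q + k) = level π k + ∑' q, level π (q + (k + 1)) := by
  simpa [add_assoc, add_comm 1] using (summable_level hπ k).tsum_eq_zero_add

theorem tsum_level_zero_add_one (hπ : HasSum π 1) :
    (∑' q, level π q) 0 + (∑' q, level π q) 1 = 1 := by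
  have hfib := hπ.prod_fiberwise fun c =>
    (hπ.summable.comp_injective (Prod.mk_right_injective c)).hasSum
  have hsum : Summable (level π) := by simpa using summable_level hπ.summable 0
  rw [tsum_apply hsum, tsum_apply hsum]
  simpa [level, Fin.sum_univ_two] using (hasSum_fintype _).unique hfib

theorem tsum_level_succ_vecMul_one_sub (hπ : Summable π) {R : Matrix (Fin 2) (Fin 2) ℝ}
    (hR : ∀ q, 1 ≤ q → level π (q + 1) = level π q ᵥ* R) :
    (∑' q, level π (q + 1)) ᵥ* (1 - R) = level π 1 := by
  have hshift : (∑' q, level π (q + 1)) ᵥ* R = ∑' q, level π (q + 2) := by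
    refine ((summable_level hπ 1).hasSum.vecMul R).tsum_eq.symm.trans (tsum_congr fun q => ?_)
    exact (hR (q + 1) (by omega)).symm
  rw [vecMul_sub, vecMul_one, hshift, tsum_level_add_eq hπ 1, add_sub_cancel_right]

theorem level_eq_sum_vecMul {K : Fin 2 × ℕ → Fin 2 × ℕ → ℝ}
    (hstat : ∀ y, ∑' x, π x * K x y = π y) (q' : ℕ) (S : Finset ℕ)
    (hS : ∀ x y, y.2 = q' → x.2 ∉ S → K x y = 0) :
    level π q' = ∑ q ∈ S, level π q ᵥ* Matrix.of fun c d => K (c, q) (d, q') := by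
  ext d
  rw [level, ← hstat, tsum_eq_sum (s := Finset.univ ×ˢ S), Finset.sum_product, Finset.sum_comm]
  · simp [vecMul, dotProduct, level]
  · intro x hx
    rw [hS x _ rfl (fun h => hx (Finset.mem_product.mpr ⟨Finset.mem_univ _, h⟩)), mul_zero]

section Balance

variable {A0 A1 A2 C0 C1 : Matrix (Fin 2) (Fin 2) ℝ}

theorem level_zero_balance (hstat : ∀ y, ∑' x, π x * qbdKernel A0 A1 A2 C0 C1 x y = π y) :
    level π 0 ᵥ* C1 + level π 1 ᵥ* A2 = level π 0 := by
  conv_rhs => rw [level_eq_sum_vecMul hstat 0 {0, 1} (by grind [qbdKernel]),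
    Finset.sum_pair zero_ne_one]
  ext d
  simp [vecMul, dotProduct, qbdKernel]

theorem level_one_balance (hstat : ∀ y, ∑' x, π x * qbdKernel A0 A1 A2 C0 C1 x y = π y) :
    level π 0 ᵥ* C0 + level π 1 ᵥ* A1 + level π 2 ᵥ* A2 = level π 1 := by
  conv_rhs => rw [level_eq_sum_vecMul hstat 1 {0, 1, 2} (by grind [qbdKernel]),
    Finset.sum_insert (by decide), Finset.sum_pair (by decide), ← add_assoc]
  ext d
  simp [vecMul, dotProduct, qbdKernel]

theorem level_add_two_balance (hstat : ∀ y, ∑' x, π x * qbdKernel A0 A1 A2 C0 C1 x y = π y)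
    (q : ℕ) :
    level π (q + 1) ᵥ* A0 + level π (q + 2) ᵥ* A1 + level π (q + 3) ᵥ* A2 = level π (q + 2) := by
  conv_rhs => rw [level_eq_sum_vecMul hstat (q + 2) {q + 1, q + 2, q + 3} (by grind [qbdKernel]),
    Finset.sum_insert (by simp), Finset.sum_pair (by simp), ← add_assoc]
  ext d
  simp [vecMul, dotProduct, qbdKernel]

theorem tsum_level_vecMul_eq_self (hstat : ∀ y, ∑' x, π x * qbdKernel A0 A1 A2 C0 C1 x y = π y)
    (hπ : Summable π) {P : Matrix (Fin 2) (Fin 2) ℝ}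
    (hC : C1 + C0 = P) (hA : A2 + A1 + A0 = P) :
    (∑' q, level π q) ᵥ* P = ∑' q, level π q := by
  set s : ℕ → Fin 2 → ℝ := fun k => ∑' q, level π (q + k)
  have htail (k : ℕ) : s k = level π k + s (k + 1) := tsum_level_add_eq hπ k
  have hbal : s 1 ᵥ* A0 + s 2 ᵥ* A1 + s 3 ᵥ* A2 = s 2 := by
    have h := (((summable_level hπ 1).hasSum.vecMul A0).add
      ((summable_level hπ 2).hasSum.vecMul A1)).add ((summable_level hπ 3).hasSum.vecMul A2)
    simp only [level_add_two_balance hstat] at h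
    exact h.unique (summable_level hπ 2).hasSum
  have hs1A2 : s 1 ᵥ* A2 = level π 1 ᵥ* A2 + level π 2 ᵥ* A2 + s 3 ᵥ* A2 := by
    rw [htail 1, htail 2, add_vecMul, add_vecMul, add_assoc]
  have hs1A1 : s 1 ᵥ* A1 = level π 1 ᵥ* A1 + s 2 ᵥ* A1 := by rw [htail 1, add_vecMul]
  change s 0 ᵥ* P = s 0
  rw [htail 0, zero_add, add_vecMul]
  nth_rw 1 [← hC]
  rw [← hA, vecMul_add, vecMul_add, vecMul_add]
  linear_combination level_zero_balance hstat + level_one_balance hstat + hbal + hs1A2 + hs1A1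
    - htail 1

end Balance

end QBD

open QBD

theorem stmt2_general
    (A0 A1 A2 C0 C1 : Matrix (Fin 2) (Fin 2) ℝ)
    (α β : ℝ) (hα : α ∈ Set.Ioo (0 : ℝ) 1) (hβ : β ∈ Set.Ioo (0 : ℝ) 1)
    (N : ℕ) (hN : 1 ≤ N)
    (hC : C1 + C0 = (!![1 - α, α; β, 1 - β]) ^ N)
    (hA : A2 + A1 + A0 = (!![1 - α, α; β, 1 - β]) ^ N)
    -- π is a stationary probability distribution for T
    (π : Fin 2 × ℕ → ℝ)
    (hπ1 : HasSum π 1)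
    (hstat : ∀ y, ∑' x : Fin 2 × ℕ, π x * qbdKernel A0 A1 A2 C0 C1 x y = π y)
    -- R has nonnegative entries, spectral radius < 1, and governs levels q ≥ 1
    (R : Matrix (Fin 2) (Fin 2) ℝ)
    (hRspec : specRad R < 1)
    (hRlev : ∀ q : ℕ, 1 ≤ q → (fun c => π (c, q + 1)) = (fun c => π (c, q)) ᵥ* R)
    (hπ1eq : (fun c => π (c, 1)) = (fun c => π (c, 0)) ᵥ* ((1 - C1) * A2⁻¹))
    -- I + Z·(I − R)⁻¹ is invertible
    (hZinv : IsUnit (1 + (1 - C1) * A2⁻¹ * (1 - R)⁻¹)) :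
    (fun c => π (c, 0)) =
      ![β / (α + β), α / (α + β)] ᵥ* (1 + (1 - C1) * A2⁻¹ * (1 - R)⁻¹)⁻¹ := by
  have hmarginal : ∑' q, level π q = ![β / (α + β), α / (α + β)] :=
    eq_stationary_of_vecMul_pow_eq_self hα.1 hβ.1 (by linarith [hα.2, hβ.2]) (by omega)
      (tsum_level_vecMul_eq_self hstat hπ1.summable hC hA) (tsum_level_zero_add_one hπ1)
  have htail : ∑' q, level π (q + 1) = level π 1 ᵥ* (1 - R)⁻¹ :=
    eq_vecMul_inv_of_vecMul_eq (isUnit_one_sub_of_specRad_lt_one hRspec)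
      (tsum_level_succ_vecMul_one_sub hπ1.summable hRlev)
  refine eq_vecMul_inv_of_vecMul_eq hZinv ?_
  change level π 0 ᵥ* _ = _
  rw [vecMul_add, vecMul_one, ← vecMul_vecMul, ← hmarginal,
    show level π 0 ᵥ* ((1 - C1) * A2⁻¹) = level π 1 from hπ1eq.symm, ← htail]
  simpa using (tsum_level_add_eq hπ1.summable 0).symm

theorem stmt2
    (A0 A1 A2 C0 C1 : Matrix (Fin 2) (Fin 2) ℝ)
    (hA0 : ∀ c d, 0 ≤ A0 c d) (hA1 : ∀ c d, 0 ≤ A1 c d) (hA2 : ∀ c d, 0 ≤ A2 c d)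
    (hC0 : ∀ c d, 0 ≤ C0 c d) (hC1 : ∀ c d, 0 ≤ C1 c d)
    (hCrow : ∀ c, ∑ d, (C1 + C0) c d = 1)
    (hArow : ∀ c, ∑ d, (A2 + A1 + A0) c d = 1)
    (α β : ℝ) (hα : α ∈ Set.Ioo (0 : ℝ) 1) (hβ : β ∈ Set.Ioo (0 : ℝ) 1)
    (N : ℕ) (hN : 1 ≤ N)
    (hC : C1 + C0 = (!![1 - α, α; β, 1 - β]) ^ N)
    (hA : A2 + A1 + A0 = (!![1 - α, α; β, 1 - β]) ^ N)
    -- π is a stationary probability distribution for T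
    (π : Fin 2 × ℕ → ℝ)
    (hπ0 : ∀ x, 0 ≤ π x) (hπ1 : HasSum π 1)
    (hstat : ∀ y, ∑' x : Fin 2 × ℕ, π x * qbdKernel A0 A1 A2 C0 C1 x y = π y)
    -- A2 is invertible
    (hA2inv : IsUnit A2)
    -- R has nonnegative entries, spectral radius < 1, and governs levels q ≥ 1
    (R : Matrix (Fin 2) (Fin 2) ℝ)
    (hR0 : ∀ i j, 0 ≤ R i j)
    (hRspec : specRad R < 1)
    (hRlev : ∀ q : ℕ, 1 ≤ q → (fun c => π (c, q + 1)) = (fun c => π (c, q)) ᵥ* R)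
    (hπ1eq : (fun c => π (c, 1)) = (fun c => π (c, 0)) ᵥ* ((1 - C1) * A2⁻¹))
    -- I + Z·(I − R)⁻¹ is invertible
    (hZinv : IsUnit (1 + (1 - C1) * A2⁻¹ * (1 - R)⁻¹)) :
    (fun c => π (c, 0)) =
      ![β / (α + β), α / (α + β)] ᵥ* (1 + (1 - C1) * A2⁻¹ * (1 - R)⁻¹)⁻¹ :=
  stmt2_general A0 A1 A2 C0 C1 α β hα hβ N hN hC hA π hπ1 hstat R hRspec hRlev hπ1eq hZinv
end

section
/- Let R be a 2×2 real matrix with all entries strictly positive and spectral radius ρ(R) ∈ (0,1). Let π_1 be a nonzero row vector in ℝ² with nonnegative entries, and for each q ≥ 1 set π_q = π_1 · R^{q−1}. For each τ ≥ 1 define the tail probability 𝒫(τ) = ∑_{q ≥ τ} (π_q(0) + π_q(1)) (this series converges absolutely because ρ(R) < 1). Then lim_{τ→∞} τ⁻¹ · log 𝒫(τ) = log ρ(R). -/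
open Matrix

/-!
For a `2 × 2` matrix with positive entries, the larger root `ρ = (tr R + √(disc R)) / 2` of the
characteristic polynomial dominates the other root in absolute value, so it is the spectral
radius, and it has the positive eigenvector `v = (R 0 1, ρ - R 0 0)`. Pairing with `v` gives
`(π₁ R^q) ⬝ v = ρ^q (π₁ ⬝ v)`; as `π₁ R^q` is nonnegative and `v` is bounded above and below,
the mass of `π₁ R^q` is squeezed between two multiples of `ρ^q`. Summing the geometric tails,
`𝒫(τ)` lies between two multiples of `ρ^τ`, whence `τ⁻¹ log 𝒫(τ) → log ρ`.
-/

open Filter Topology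

namespace Matrix

variable {n : Type*} [Fintype n]

lemma discr_fin_two_eq (A : Matrix (Fin 2) (Fin 2) ℝ) :
    A.discr = (A 0 0 - A 1 1) ^ 2 + 4 * A 0 1 * A 1 0 := by
  rw [discr_fin_two, trace_fin_two, det_fin_two]
  ring

lemma mem_spectrum_map_complex_iff (A : Matrix (Fin 2) (Fin 2) ℝ) (hA : 0 ≤ A.discr) (μ : ℂ) :
    μ ∈ spectrum ℂ (A.map (algebraMap ℝ ℂ)) ↔
      μ = ((A.trace + √A.discr) / 2 : ℝ) ∨ μ = ((A.trace - √A.discr) / 2 : ℝ) := by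
  have hdiscrim : discrim 1 (-(A.trace : ℂ)) A.det = (√A.discr : ℂ) * (√A.discr : ℂ) := by
    rw [← Complex.ofReal_mul, Real.mul_self_sqrt hA, discr_fin_two, discrim]
    push_cast
    ring
  rw [mem_spectrum_iff_isRoot_charpoly, charpoly_map, Polynomial.IsRoot.def, Polynomial.eval_map,
    charpoly_fin_two]
  simp only [Polynomial.eval₂_add, Polynomial.eval₂_sub, Polynomial.eval₂_mul,
    Polynomial.eval₂_X_pow, Polynomial.eval₂_C, Polynomial.eval₂_X, Complex.coe_algebraMap]
  convert quadratic_eq_zero_iff one_ne_zero hdiscrim μ using 1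
  · constructor <;> intro h <;> linear_combination h
  · push_cast
    ring_nf

noncomputable def perronRoot (A : Matrix (Fin 2) (Fin 2) ℝ) : ℝ := (A.trace + √A.discr) / 2

lemma specRad_eq_perronRoot (A : Matrix (Fin 2) (Fin 2) ℝ) (hdiscr : 0 ≤ A.discr)
    (htrace : 0 ≤ A.trace) : specRad A = A.perronRoot := by
  have hroots : {r : ℝ | ∃ μ : ℂ, μ ∈ spectrum ℂ (A.map (algebraMap ℝ ℂ)) ∧ r = ‖μ‖} =
      {|(A.trace + √A.discr) / 2|, |(A.trace - √A.discr) / 2|} := by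
    ext r
    simp only [Set.mem_ofPred_eq, mem_spectrum_map_complex_iff A hdiscr, or_and_right, exists_or,
      exists_eq_left, Complex.norm_real, Real.norm_eq_abs, Set.mem_insert_iff,
      Set.mem_singleton_iff]
  have hle : |(A.trace - √A.discr) / 2| ≤ |(A.trace + √A.discr) / 2| := by
    have := Real.sqrt_nonneg A.discr
    rw [abs_of_nonneg (by positivity : 0 ≤ (A.trace + √A.discr) / 2), abs_le]
    constructor <;> linarith
  rw [specRad, hroots, csSup_pair, max_eq_left hle, perronRoot,
    abs_of_nonneg (by positivity)]

lemma isRoot_charpoly_perronRoot (A : Matrix (Fin 2) (Fin 2) ℝ) (hdiscr : 0 ≤ A.discr) :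
    A.charpoly.IsRoot A.perronRoot := by
  have hsq : √A.discr ^ 2 = A.trace ^ 2 - 4 * A.det := by rw [Real.sq_sqrt hdiscr, discr_fin_two]
  simp only [Polynomial.IsRoot.def, charpoly_fin_two, Polynomial.eval_add, Polynomial.eval_sub,
    Polynomial.eval_mul, Polynomial.eval_pow, Polynomial.eval_C, Polynomial.eval_X, perronRoot]
  linear_combination hsq / 4

lemma mulVec_eq_smul_of_isRoot_charpoly {K : Type*} [CommRing K] [Nontrivial K]
    (A : Matrix (Fin 2) (Fin 2) K) {μ : K} (hμ : A.charpoly.IsRoot μ) :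
    A *ᵥ ![A 0 1, μ - A 0 0] = μ • ![A 0 1, μ - A 0 0] := by
  simp only [Polynomial.IsRoot.def, charpoly_fin_two, Polynomial.eval_add, Polynomial.eval_sub,
    Polynomial.eval_mul, Polynomial.eval_pow, Polynomial.eval_C, Polynomial.eval_X,
    trace_fin_two, det_fin_two] at hμ
  ext i
  fin_cases i
  · simp [mulVec, dotProduct, Fin.sum_univ_two]
    ring
  · simp [mulVec, dotProduct, Fin.sum_univ_two]
    linear_combination -hμ

noncomputable def perronVec (A : Matrix (Fin 2) (Fin 2) ℝ) : Fin 2 → ℝ :=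
  ![A 0 1, A.perronRoot - A 0 0]

lemma mulVec_perronVec (A : Matrix (Fin 2) (Fin 2) ℝ) (hdiscr : 0 ≤ A.discr) :
    A *ᵥ A.perronVec = A.perronRoot • A.perronVec :=
  mulVec_eq_smul_of_isRoot_charpoly A (isRoot_charpoly_perronRoot A hdiscr)

lemma perronVec_pos (A : Matrix (Fin 2) (Fin 2) ℝ) (hA : ∀ i j, 0 < A i j) :
    ∀ i, 0 < A.perronVec i := by
  have hsqrt : A 0 0 - A 1 1 < √A.discr := by
    refine Real.lt_sqrt_of_sq_lt ?_
    rw [discr_fin_two_eq]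
    nlinarith [hA 0 1, hA 1 0, mul_pos (hA 0 1) (hA 1 0)]
  intro i
  fin_cases i
  · exact hA 0 1
  · simp only [perronVec, Fin.mk_one, cons_val_one, cons_val_zero, perronRoot, trace_fin_two]
    linarith

lemma pow_mulVec_eq_smul [DecidableEq n] {K : Type*} [CommSemiring K] {A : Matrix n n K}
    {v : n → K} {μ : K} (h : A *ᵥ v = μ • v) (q : ℕ) : A ^ q *ᵥ v = μ ^ q • v := by
  induction q with
  | zero => simp
  | succ q ih => rw [pow_succ, ← mulVec_mulVec, h, mulVec_smul, ih, smul_smul, pow_succ']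

lemma vecMul_pow_dotProduct [DecidableEq n] {K : Type*} [CommSemiring K] {A : Matrix n n K}
    {v : n → K} {μ : K} (h : A *ᵥ v = μ • v) (π : n → K) (q : ℕ) :
    (π ᵥ* A ^ q) ⬝ᵥ v = μ ^ q * (π ⬝ᵥ v) := by
  rw [← dotProduct_mulVec, pow_mulVec_eq_smul h, dotProduct_smul, smul_eq_mul]

lemma vecMul_nonneg {K : Type*} [Semiring K] [PartialOrder K]
    [IsOrderedRing K] {π : n → K} {A : Matrix n n K} (hπ : ∀ i, 0 ≤ π i)
    (hA : ∀ i j, 0 ≤ A i j) (j : n) : 0 ≤ (π ᵥ* A) j :=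
  dotProduct_nonneg_of_nonneg hπ (fun i => hA i j)

lemma dotProduct_pos_of_nonneg_of_ne_zero {π v : n → ℝ} (hπ : ∀ i, 0 ≤ π i) (hπ0 : π ≠ 0)
    (hv : ∀ i, 0 < v i) : 0 < π ⬝ᵥ v := by
  obtain ⟨i, hi⟩ := Function.ne_iff.mp hπ0
  calc 0 < π i * v i := mul_pos ((hπ i).lt_of_ne' hi) (hv i)
    _ ≤ π ⬝ᵥ v := Finset.single_le_sum (fun j _ => mul_nonneg (hπ j) (hv j).le)
        (Finset.mem_univ i)

lemma mul_sum_le_dotProduct {w v : n → ℝ} {c : ℝ} (hw : ∀ i, 0 ≤ w i) (hv : ∀ i, c ≤ v i) :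
    c * ∑ i, w i ≤ w ⬝ᵥ v := by
  rw [Finset.mul_sum]
  exact Finset.sum_le_sum fun i _ =>
    (mul_comm c (w i)).trans_le (mul_le_mul_of_nonneg_left (hv i) (hw i))

lemma dotProduct_le_mul_sum {w v : n → ℝ} {c : ℝ} (hw : ∀ i, 0 ≤ w i) (hv : ∀ i, v i ≤ c) :
    w ⬝ᵥ v ≤ c * ∑ i, w i := by
  rw [Finset.mul_sum]
  exact Finset.sum_le_sum fun i _ =>
    (mul_le_mul_of_nonneg_left (hv i) (hw i)).trans_eq (mul_comm (w i) c)

theorem exists_bounds_sum_vecMul_pow [DecidableEq n] {A : Matrix n n ℝ}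
    (hA : ∀ i j, 0 ≤ A i j) {v : n → ℝ} (hv : ∀ i, 0 < v i) {ρ : ℝ} (hAv : A *ᵥ v = ρ • v)
    {π : n → ℝ} (hπ : ∀ i, 0 ≤ π i) (hπ0 : π ≠ 0) :
    ∃ c₁ c₂ : ℝ, 0 < c₁ ∧ 0 < c₂ ∧
      ∀ q, c₁ * ρ ^ q ≤ ∑ i, (π ᵥ* A ^ q) i ∧ ∑ i, (π ᵥ* A ^ q) i ≤ c₂ * ρ ^ q := by
  obtain ⟨i₀, -⟩ := Function.ne_iff.mp hπ0
  obtain ⟨imin, -, hmin⟩ := Finset.exists_min_image Finset.univ v ⟨i₀, Finset.mem_univ _⟩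
  obtain ⟨imax, -, hmax⟩ := Finset.exists_max_image Finset.univ v ⟨i₀, Finset.mem_univ _⟩
  have hK := dotProduct_pos_of_nonneg_of_ne_zero hπ hπ0 hv
  refine ⟨π ⬝ᵥ v / v imax, π ⬝ᵥ v / v imin, div_pos hK (hv imax), div_pos hK (hv imin),
    fun q => ⟨?_, ?_⟩⟩
  · rw [div_mul_eq_mul_div, div_le_iff₀ (hv imax), mul_comm _ (v imax), mul_comm (π ⬝ᵥ v),
      ← vecMul_pow_dotProduct hAv]
    exact dotProduct_le_mul_sum (vecMul_nonneg hπ (pow_apply_nonneg hA q))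
      (fun i => hmax i (Finset.mem_univ i))
  · rw [div_mul_eq_mul_div, le_div_iff₀ (hv imin), mul_comm, mul_comm (π ⬝ᵥ v),
      ← vecMul_pow_dotProduct hAv]
    exact mul_sum_le_dotProduct (vecMul_nonneg hπ (pow_apply_nonneg hA q))
      (fun i => hmin i (Finset.mem_univ i))

end Matrix

lemma hasSum_tail_bounds_of_geometric_bounds {u : ℕ → ℝ} {c₁ c₂ ρ S : ℝ} (hρ₀ : 0 ≤ ρ)
    (hρ₁ : ρ < 1) (hu : ∀ q, c₁ * ρ ^ q ≤ u q ∧ u q ≤ c₂ * ρ ^ q) (k : ℕ)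
    (hS : HasSum (fun j => u (k + j)) S) :
    c₁ * ρ ^ k / (1 - ρ) ≤ S ∧ S ≤ c₂ * ρ ^ k / (1 - ρ) := by
  have hgeom (c : ℝ) : HasSum (fun j => c * ρ ^ (k + j)) (c * ρ ^ k / (1 - ρ)) := by
    simpa [pow_add, mul_assoc, div_eq_mul_inv] using
      (hasSum_geometric_of_lt_one hρ₀ hρ₁).mul_left (c * ρ ^ k)
  exact ⟨hasSum_le (fun j => (hu (k + j)).1) (hgeom c₁) hS,
    hasSum_le (fun j => (hu (k + j)).2) hS (hgeom c₂)⟩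

lemma tendsto_inv_mul_log_of_geometric_bounds {f : ℕ → ℝ} {c₁ c₂ ρ : ℝ} (hc₁ : 0 < c₁)
    (hc₂ : 0 < c₂) (hρ : 0 < ρ) (hf : ∀ᶠ n in atTop, c₁ * ρ ^ n ≤ f n ∧ f n ≤ c₂ * ρ ^ n) :
    Tendsto (fun n : ℕ => (n : ℝ)⁻¹ * Real.log (f n)) atTop (𝓝 (Real.log ρ)) := by
  have hlog (c : ℝ) (hc : 0 < c) (n : ℕ) (hn : n ≠ 0) :
      (n : ℝ)⁻¹ * Real.log (c * ρ ^ n) = (n : ℝ)⁻¹ * Real.log c + Real.log ρ := by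
    rw [Real.log_mul hc.ne' (pow_pos hρ n).ne', Real.log_pow, mul_add, ← mul_assoc,
      inv_mul_cancel₀ (Nat.cast_ne_zero.mpr hn), one_mul]
  have hlim (c : ℝ) : Tendsto (fun n : ℕ => (n : ℝ)⁻¹ * Real.log c + Real.log ρ) atTop
      (𝓝 (Real.log ρ)) := by
    simpa using (tendsto_inv_atTop_nhds_zero_nat.mul_const (Real.log c)).add_const (Real.log ρ)
  refine tendsto_of_tendsto_of_tendsto_of_le_of_le' (hlim c₁) (hlim c₂) ?_ ?_
  · filter_upwards [hf, eventually_ne_atTop 0] with n hn hn₀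
    rw [← hlog c₁ hc₁ n hn₀]
    exact mul_le_mul_of_nonneg_left (Real.log_le_log (by positivity) hn.1) (by positivity)
  · filter_upwards [hf, eventually_ne_atTop 0] with n hn hn₀
    rw [← hlog c₂ hc₂ n hn₀]
    exact mul_le_mul_of_nonneg_left
      (Real.log_le_log ((by positivity : 0 < c₁ * ρ ^ n).trans_le hn.1) hn.2) (by positivity)

theorem stmt3
    (R : Matrix (Fin 2) (Fin 2) ℝ)
    (hRpos : ∀ i j, 0 < R i j)
    (hspec : specRad R ∈ Set.Ioo (0 : ℝ) 1)
    (π₁ : Fin 2 → ℝ) (hπ₁ne : π₁ ≠ 0) (hπ₁nn : ∀ i, 0 ≤ π₁ i)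
    -- π_q = π₁ · R^(q-1) for q ≥ 1; the tail probability Ptail(τ) = ∑_{q ≥ τ} (π_q 0 + π_q 1)
    (Ptail : ℕ → ℝ)
    (hPtail : ∀ τ : ℕ, 1 ≤ τ →
      HasSum (fun j : ℕ =>
        (π₁ ᵥ* R ^ (τ - 1 + j)) 0 + (π₁ ᵥ* R ^ (τ - 1 + j)) 1) (Ptail τ)) :
    Filter.Tendsto (fun τ : ℕ => (τ : ℝ)⁻¹ * Real.log (Ptail τ))
      Filter.atTop (nhds (Real.log (specRad R))) := by
  have hR : ∀ i j, 0 ≤ R i j := fun i j => (hRpos i j).le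
  have hdiscr : 0 ≤ R.discr := by rw [discr_fin_two_eq]; have := hR 0 1; have := hR 1 0; positivity
  have htrace : 0 ≤ R.trace := by rw [trace_fin_two]; linarith [hR 0 0, hR 1 1]
  rw [specRad_eq_perronRoot R hdiscr htrace] at hspec ⊢
  set ρ := R.perronRoot
  obtain ⟨hρ₀, hρ₁⟩ := hspec
  have hρ₁' : 0 < 1 - ρ := sub_pos.mpr hρ₁
  obtain ⟨c₁, c₂, hc₁, hc₂, hbounds⟩ := exists_bounds_sum_vecMul_pow hR (perronVec_pos R hRpos)
    (mulVec_perronVec R hdiscr) hπ₁nn hπ₁ne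
  simp only [Fin.sum_univ_two] at hbounds
  have hshift (c : ℝ) (τ : ℕ) (hτ : 1 ≤ τ) :
      c / (ρ * (1 - ρ)) * ρ ^ τ = c * ρ ^ (τ - 1) / (1 - ρ) := by
    rw [← pow_sub_one_mul (by omega) ρ]
    field_simp
  refine tendsto_inv_mul_log_of_geometric_bounds (c₁ := c₁ / (ρ * (1 - ρ)))
    (c₂ := c₂ / (ρ * (1 - ρ))) (by positivity) (by positivity) hρ₀ ?_
  filter_upwards [eventually_ge_atTop 1] with τ hτ
  rw [hshift c₁ τ hτ, hshift c₂ τ hτ]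
  exact hasSum_tail_bounds_of_geometric_bounds hρ₀.le hρ₁ hbounds (τ - 1) (hPtail τ hτ)
end

section
/- Let A0, A1, A2 be 2×2 real matrices with nonnegative entries such that I − A1 is invertible and (I − A1)⁻¹ has nonnegative entries. Define the sequence of matrices R_0 = 0 and R_{j+1} = (A0 + R_j²·A2)·(I − A1)⁻¹. Then: (a) R_j ≤ R_{j+1} entrywise for every j ≥ 0; (b) if S is any 2×2 real matrix with nonnegative entries satisfying S = (A0 + S²·A2)·(I − A1)⁻¹, then R_j ≤ S entrywise for every j ≥ 0; (c) consequently, if such a matrix S exists, the sequence R_j converges entrywise to a limit R with nonnegative entries, and R is the minimal nonnegative solution of the equation R = (A0 + R²·A2)·(I − A1)⁻¹, i.e., R satisfies the equation and R ≤ S entrywise for every nonnegative solution S. -/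
/-!
With `F X = (A₀ + X² A₂)(I - A₁)⁻¹`, square matrices with the entrywise order form an ordered
semiring, so `F` is monotone on nonnegative matrices and `0 ≤ F 0`. Hence the iterates `F^[k] 0`
increase and stay below every nonnegative fixed point. Being bounded, they converge entrywise, and
by continuity of `F` the limit is a fixed point, which is then the least nonnegative one.
-/

open Set Filter Topology Function

section Kleene

variable {α : Type*} [Preorder α] {F : α → α} {a s : α}

theorem MonotoneOn.le_iterate (hF : MonotoneOn F (Ici a)) (ha : a ≤ F a) (k : ℕ) :
    a ≤ F^[k] a := by
  induction k with
  | zero => exact le_rfl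
  | succ k ih =>
    rw [iterate_succ_apply']
    exact ha.trans (hF le_rfl ih ih)

theorem MonotoneOn.monotone_iterate_of_le_map (hF : MonotoneOn F (Ici a)) (ha : a ≤ F a) :
    Monotone fun k => F^[k] a := by
  refine monotone_nat_of_le_succ fun k => ?_
  induction k with
  | zero => exact ha
  | succ k ih =>
    rw [iterate_succ_apply', iterate_succ_apply']
    exact hF (hF.le_iterate ha k) (hF.le_iterate ha (k + 1)) ih

theorem MonotoneOn.iterate_le_of_map_le (hF : MonotoneOn F (Ici a)) (ha : a ≤ F a) (has : a ≤ s)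
    (hs : F s ≤ s) (k : ℕ) : F^[k] a ≤ s := by
  induction k with
  | zero => exact has
  | succ k ih =>
    rw [iterate_succ_apply']
    exact (hF (hF.le_iterate ha k) has ih).trans hs

theorem MonotoneOn.isLeast_fixedPoints_of_tendsto_iterate [TopologicalSpace α] [T2Space α]
    [OrderClosedTopology α] {L : α} (hF : MonotoneOn F (Ici a)) (ha : a ≤ F a)
    (hcont : ContinuousAt F L) (hL : Tendsto (fun k => F^[k] a) atTop (𝓝 L)) :
    IsLeast {s | a ≤ s ∧ IsFixedPt F s} L :=
  ⟨⟨(hF.monotone_iterate_of_le_map ha).ge_of_tendsto hL 0, isFixedPt_of_tendsto_iterate hL hcont⟩,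
    fun _ ⟨has, hs⟩ => le_of_tendsto' hL (hF.iterate_le_of_map_le ha has hs.le)⟩

end Kleene

theorem monotoneOn_add_sq_mul_mul {R : Type*} [Semiring R] [PartialOrder R] [IsOrderedRing R]
    (A : R) {B C : R} (hB : 0 ≤ B) (hC : 0 ≤ C) :
    MonotoneOn (fun X => (A + X ^ 2 * B) * C) (Ici 0) := fun _ hX _ _ hXY =>
  mul_le_mul_of_nonneg_right
    (add_le_add_right (mul_le_mul_of_nonneg_right (pow_le_pow_left₀ hX hXY 2) hB) A) hC

namespace Matrix

variable {m n α : Type*}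

/-- Mathlib's order on matrices (scoped to `MatrixOrder`) is the Loewner order; here we need the
entrywise one. -/
abbrev entrywisePartialOrder [PartialOrder α] : PartialOrder (Matrix m n α) :=
  inferInstanceAs (PartialOrder (m → n → α))

namespace Entrywise

attribute [scoped instance] entrywisePartialOrder

theorem orderClosedTopology [PartialOrder α] [TopologicalSpace α] [OrderClosedTopology α] :
    OrderClosedTopology (Matrix m n α) :=
  inferInstanceAs (OrderClosedTopology (m → n → α))

theorem isOrderedRing [Fintype n] [DecidableEq n] [Semiring α] [PartialOrder α]
    [IsOrderedRing α] : IsOrderedRing (Matrix n n α) where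
  add_le_add_left _ _ h _ i j := add_le_add (h i j) le_rfl
  zero_le_one i j := by
    rw [one_apply]
    split_ifs <;> simp
  mul_le_mul_of_nonneg_left _ hX _ _ h i j :=
    Finset.sum_le_sum fun k _ => mul_le_mul_of_nonneg_left (h k j) (hX i k)
  mul_le_mul_of_nonneg_right _ hX _ _ h i j :=
    Finset.sum_le_sum fun k _ => mul_le_mul_of_nonneg_right (h i k) (hX k j)

attribute [scoped instance] orderClosedTopology isOrderedRing

theorem exists_tendsto_of_monotone_of_le [ConditionallyCompleteLattice α] [TopologicalSpace α]
    [SupConvergenceClass α] {R : ℕ → Matrix m n α} {S : Matrix m n α} (hR : Monotone R)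
    (hS : ∀ k, R k ≤ S) : ∃ L, Tendsto R atTop (𝓝 L) :=
  ⟨of fun i j => ⨆ k, R k i j, tendsto_pi_nhds.2 fun i => tendsto_pi_nhds.2 fun j =>
    tendsto_atTop_ciSup (fun _ _ h => hR h i j) ⟨S i j, by rintro _ ⟨k, rfl⟩; exact hS k i j⟩⟩

end Entrywise

end Matrix

open scoped Matrix.Entrywise

theorem stmt5_general
    (A0 A1 A2 : Matrix (Fin 2) (Fin 2) ℝ)
    (hA0 : ∀ i j, 0 ≤ A0 i j) (hA2 : ∀ i j, 0 ≤ A2 i j)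
    (hinvnn : ∀ i j, 0 ≤ (1 - A1)⁻¹ i j)
    (R : ℕ → Matrix (Fin 2) (Fin 2) ℝ)
    (hR0 : R 0 = 0)
    (hRrec : ∀ j : ℕ, R (j + 1) = (A0 + (R j) ^ 2 * A2) * (1 - A1)⁻¹) :
    -- (a) the sequence is entrywise nondecreasing
    (∀ j : ℕ, ∀ i k, R j i k ≤ R (j + 1) i k) ∧
    -- (b) every iterate is entrywise below any nonnegative solution S
    (∀ S : Matrix (Fin 2) (Fin 2) ℝ, (∀ i k, 0 ≤ S i k) →
      S = (A0 + S ^ 2 * A2) * (1 - A1)⁻¹ → ∀ j : ℕ, ∀ i k, R j i k ≤ S i k) ∧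
    -- (c) if a nonnegative solution exists, the iterates converge entrywise to the
    -- minimal nonnegative solution
    ((∃ S : Matrix (Fin 2) (Fin 2) ℝ, (∀ i k, 0 ≤ S i k) ∧
        S = (A0 + S ^ 2 * A2) * (1 - A1)⁻¹) →
      ∃ Rlim : Matrix (Fin 2) (Fin 2) ℝ,
        (∀ i k, Filter.Tendsto (fun j => R j i k) Filter.atTop (nhds (Rlim i k))) ∧
        (∀ i k, 0 ≤ Rlim i k) ∧
        Rlim = (A0 + Rlim ^ 2 * A2) * (1 - A1)⁻¹ ∧
        (∀ S : Matrix (Fin 2) (Fin 2) ℝ, (∀ i k, 0 ≤ S i k) →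
          S = (A0 + S ^ 2 * A2) * (1 - A1)⁻¹ → ∀ i k, Rlim i k ≤ S i k)) := by
  set F := fun X : Matrix (Fin 2) (Fin 2) ℝ => (A0 + X ^ 2 * A2) * (1 - A1)⁻¹
  have hF : MonotoneOn F (Ici 0) := monotoneOn_add_sq_mul_mul A0 hA2 hinvnn
  have hF0 : 0 ≤ F 0 := by simpa [F] using mul_nonneg hA0 hinvnn
  have hR : R = fun j => F^[j] 0 := funext fun j => by
    induction j with
    | zero => exact hR0
    | succ j ih => rw [hRrec, ih, iterate_succ_apply']
  subst hR
  have hle : ∀ S, 0 ≤ S → S = F S → ∀ j, F^[j] 0 ≤ S := fun S hS hSF =>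
    hF.iterate_le_of_map_le hF0 hS hSF.symm.le
  refine ⟨fun j => hF.monotone_iterate_of_le_map hF0 j.le_succ, hle, ?_⟩
  rintro ⟨S, hS, hSF⟩
  obtain ⟨L, hL⟩ := Matrix.Entrywise.exists_tendsto_of_monotone_of_le
    (hF.monotone_iterate_of_le_map hF0) (hle S hS hSF)
  obtain ⟨⟨hL0, hLF⟩, hLmin⟩ :=
    hF.isLeast_fixedPoints_of_tendsto_iterate hF0 (by fun_prop) hL
  exact ⟨L, fun i k => tendsto_pi_nhds.1 (tendsto_pi_nhds.1 hL i) k, hL0, hLF.symm,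
    fun S hS hSF => hLmin ⟨hS, hSF.symm⟩⟩

theorem stmt5
    (A0 A1 A2 : Matrix (Fin 2) (Fin 2) ℝ)
    (hA0 : ∀ i j, 0 ≤ A0 i j) (hA1 : ∀ i j, 0 ≤ A1 i j) (hA2 : ∀ i j, 0 ≤ A2 i j)
    (hinv : IsUnit (1 - A1))
    (hinvnn : ∀ i j, 0 ≤ (1 - A1)⁻¹ i j)
    (R : ℕ → Matrix (Fin 2) (Fin 2) ℝ)
    (hR0 : R 0 = 0)
    (hRrec : ∀ j : ℕ, R (j + 1) = (A0 + (R j) ^ 2 * A2) * (1 - A1)⁻¹) :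
    -- (a) the sequence is entrywise nondecreasing
    (∀ j : ℕ, ∀ i k, R j i k ≤ R (j + 1) i k) ∧
    -- (b) every iterate is entrywise below any nonnegative solution S
    (∀ S : Matrix (Fin 2) (Fin 2) ℝ, (∀ i k, 0 ≤ S i k) →
      S = (A0 + S ^ 2 * A2) * (1 - A1)⁻¹ → ∀ j : ℕ, ∀ i k, R j i k ≤ S i k) ∧
    -- (c) if a nonnegative solution exists, the iterates converge entrywise to the
    -- minimal nonnegative solution
    ((∃ S : Matrix (Fin 2) (Fin 2) ℝ, (∀ i k, 0 ≤ S i k) ∧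
        S = (A0 + S ^ 2 * A2) * (1 - A1)⁻¹) →
      ∃ Rlim : Matrix (Fin 2) (Fin 2) ℝ,
        (∀ i k, Filter.Tendsto (fun j => R j i k) Filter.atTop (nhds (Rlim i k))) ∧
        (∀ i k, 0 ≤ Rlim i k) ∧
        Rlim = (A0 + Rlim ^ 2 * A2) * (1 - A1)⁻¹ ∧
        (∀ S : Matrix (Fin 2) (Fin 2) ℝ, (∀ i k, 0 ≤ S i k) →
          S = (A0 + S ^ 2 * A2) * (1 - A1)⁻¹ → ∀ i k, Rlim i k ≤ S i k)) :=
  stmt5_general A0 A1 A2 hA0 hA2 hinvnn R hR0 hRrec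
end

section
/- Let n, p be natural numbers and let E ⊆ {0,…,n−1} be a fixed set of coordinates with |E| = e. For a matrix H chosen uniformly at random from all p×n matrices over GF(2), the probability that the family of columns of H indexed by E is linearly dependent over GF(2) equals P_f(p,e) = 1 − ∏_{i=0}^{e−1} (1 − 2^{i−p}). -/
/-!
Only the columns indexed by `E` matter, so the probability is that of `e` uniformly random
vectors of `K^p` being dependent, for `K` a field with `q` elements (here `q = 2`). Chosen one at
a time, independent vectors are counted by `∏_{i<e} (q^p - q^i)` (the `i`-th vector avoids a span
of `q^i` elements), and dividing by `q^{pe}` gives `∏ (1 - q^{i-p})`; for `e > p` the factor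
`i = p` vanishes.
-/

open Matrix

open Finset

section LinearIndependent

variable (K V : Type*) [DivisionRing K] [AddCommGroup V] [Module K V] [Fintype K] [Finite V]

theorem cast_card_linearIndependent (k : ℕ) :
    (Nat.card {s : Fin k → V // LinearIndependent K s} : ℝ) =
      ∏ i ∈ range k,
        ((Fintype.card K : ℝ) ^ Module.finrank K V - (Fintype.card K : ℝ) ^ i) := by
  by_cases hk : k ≤ Module.finrank K V
  · rw [card_linearIndependent hk, Fin.prod_univ_eq_prod_range (fun i => _ - _), Nat.cast_prod]
    refine prod_congr rfl fun i hi => ?_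
    have hi : i ≤ Module.finrank K V := (mem_range.1 hi).le.trans hk
    rw [Nat.cast_sub (Nat.pow_le_pow_right Fintype.card_pos hi)]
    norm_cast
  · have : IsEmpty {s : Fin k → V // LinearIndependent K s} :=
      ⟨fun ⟨s, hs⟩ => by simpa using (hs.fintype_card_le_finrank.trans_lt (not_le.1 hk)).ne⟩
    rw [Nat.card_of_isEmpty, Nat.cast_zero]
    exact (prod_eq_zero (mem_range.2 (not_le.1 hk)) (sub_self _)).symm

theorem card_linearIndependent_div_card {ι : Type*} [Fintype ι] {k : ℕ}
    (hι : Fintype.card ι = k) :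
    (Nat.card {s : ι → V // LinearIndependent K s} : ℝ) / Nat.card (ι → V) =
      ∏ i ∈ range k, (1 - (Fintype.card K : ℝ) ^ ((i : ℤ) - Module.finrank K V)) := by
  let e := Fintype.equivFinOfCardEq hι
  have hq : (0 : ℝ) < Fintype.card K := by exact_mod_cast Fintype.card_pos
  have := Fintype.ofFinite V
  have hreindex : Nat.card {s : ι → V // LinearIndependent K s} =
      Nat.card {s : Fin k → V // LinearIndependent K s} :=
    Nat.card_congr <| (e.arrowCongr (Equiv.refl V)).subtypeEquiv fun s =>
      (linearIndependent_equiv e.symm).symm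
  have hV : (Nat.card (ι → V) : ℝ) =
      ∏ _i ∈ range k, (Fintype.card K : ℝ) ^ Module.finrank K V := by
    rw [Nat.card_fun, Nat.card_eq_fintype_card, Module.card_eq_pow_finrank (K := K),
      Nat.card_eq_fintype_card, hι, prod_const, card_range]
    norm_cast
  rw [hreindex, cast_card_linearIndependent, hV, ← prod_div_distrib]
  refine prod_congr rfl fun i _ => ?_
  rw [zpow_sub₀ hq.ne', zpow_natCast, zpow_natCast, sub_div, div_self (by positivity)]

end LinearIndependent

theorem card_subtype_restrict_eq_mul {ι β : Type*} [Finite ι] (S : Finset ι)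
    (P : (S → β) → Prop) :
    Nat.card {f : ι → β // P fun i : S => f i} =
      Nat.card {g : S → β // P g} * Nat.card ({i // i ∉ S} → β) := by
  classical
  rw [← Nat.card_prod]
  exact Nat.card_congr <|
    ((Equiv.piEquivPiSubtypeProd (· ∈ S) fun _ => β).subtypeEquiv fun _ => Iff.rfl).trans
      Equiv.prodSubtypeFstEquivSubtypeProd

theorem card_subtype_restrict_div_card {ι β : Type*} [Finite ι] [Finite β] [Nonempty β]
    (S : Finset ι) (P : (S → β) → Prop) :
    (Nat.card {f : ι → β // P fun i : S => f i} : ℝ) / Nat.card (ι → β) =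
      Nat.card {g : S → β // P g} / Nat.card (S → β) := by
  have hsplit : Nat.card (ι → β) = Nat.card (S → β) * Nat.card ({i // i ∉ S} → β) := by
    simpa using card_subtype_restrict_eq_mul S fun _ => True
  rw [card_subtype_restrict_eq_mul, hsplit, Nat.cast_mul, Nat.cast_mul, mul_div_mul_right]
  exact_mod_cast Nat.card_pos.ne'

theorem card_subtype_not_div_card {α : Type*} [Fintype α] [Nonempty α] (P : α → Prop) :
    (Nat.card {x // ¬ P x} : ℝ) / Nat.card α = 1 - Nat.card {x // P x} / Nat.card α := by
  classical
  simp only [Nat.card_eq_fintype_card]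
  rw [Fintype.card_subtype_compl, Nat.cast_sub (Fintype.card_subtype_le P), sub_div,
    div_self (by positivity)]

theorem stmt10 (p n e : ℕ) (E : Finset (Fin n)) (hE : E.card = e) :
    (Nat.card {H : Matrix (Fin p) (Fin n) (ZMod 2) //
        ¬ LinearIndependent (ZMod 2) (fun i : E => fun r => H r (i : Fin n))} : ℝ) /
      2 ^ (p * n) =
    1 - ∏ i ∈ Finset.range e, (1 - (2 : ℝ) ^ ((i : ℤ) - (p : ℤ))) := by
  have hcols : Nat.card {H : Matrix (Fin p) (Fin n) (ZMod 2) //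
        ¬ LinearIndependent (ZMod 2) (fun i : E => fun r => H r (i : Fin n))} =
      Nat.card {f : Fin n → Fin p → ZMod 2 // ¬ LinearIndependent (ZMod 2) fun i : E => f i} :=
    Nat.card_congr <| (Equiv.piComm _).subtypeEquiv fun _ => Iff.rfl
  have htotal : (2 : ℝ) ^ (p * n) = Nat.card (Fin n → Fin p → ZMod 2) := by
    simp [← pow_mul]
  rw [hcols, htotal, card_subtype_restrict_div_card E fun g => ¬ LinearIndependent (ZMod 2) g,
    card_subtype_not_div_card,
    card_linearIndependent_div_card (ZMod 2) _ (by simpa using hE)]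
  simp
end
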